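/- Let G be a c-uniform hypergraph on V = {1,…,n}, let α̃ ≥ 0 and τ ∈ ℕ, let S ⊆ V and i ∈ V with |S ∪ {i}| ≤ τ. Suppose every set in 𝒮'(S) and every set in 𝒮'(S ∪ {i}) has size at most τ/10, and let S'_max(S) denote the union of all sets in 𝒮'(S) and S'_max(S ∪ {i}) the union of all sets in 𝒮'(S ∪ {i}). Then for every S'' ∈ 𝒮'(S ∪ {i}), the set S'_max(S) ∪ S'' belongs to 𝒮'(S ∪ {i}); in particular, S'_max(S) ⊆ S'_max(S ∪ {i}). -/

import Mathlib

open Finset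
open scoped Classical

/-- Φ(S) = α̃ |E(S)| − |S|, where E(S) is the set of hyperedges of `G` contained in `S`. -/
noncomputable def Phi (n : ℕ) (G : Finset (Finset (Fin n))) (αt : ℝ)
    (S : Finset (Fin n)) : ℝ :=
  αt * ((G.filter fun e => e ⊆ S).card : ℝ) - S.card

/-- Φ°(S): the maximum of Φ over candidate sets `S'` for `S` (sets with
`S ⊆ S'` and `|S'| ≤ τ`). -/
noncomputable def PhiOpt (n : ℕ) (G : Finset (Finset (Fin n))) (αt : ℝ) (τ : ℕ)
    (S : Finset (Fin n)) : ℝ :=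
  sSup {x : ℝ | ∃ S' : Finset (Fin n), S ⊆ S' ∧ S'.card ≤ τ ∧ x = Phi n G αt S'}

/-- 𝒮'(S): the collection of candidate sets for `S` attaining `Φ°(S)`. -/
def OptSets (n : ℕ) (G : Finset (Finset (Fin n))) (αt : ℝ) (τ : ℕ)
    (S : Finset (Fin n)) : Set (Finset (Fin n)) :=
  {S' | S ⊆ S' ∧ S'.card ≤ τ ∧ Phi n G αt S' = PhiOpt n G αt τ S}

/-- S'_max(S): the union of all sets in 𝒮'(S). -/
noncomputable def Smax (n : ℕ) (G : Finset (Finset (Fin n))) (αt : ℝ) (τ : ℕ)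
    (S : Finset (Fin n)) : Finset (Fin n) :=
  (Finset.univ.filter fun S' => S' ∈ OptSets n G αt τ S).sup id

/-! The number of hyperedges inside a set is supermodular, and so is `Φ` when `α̃ ≥ 0`.
If `A` is optimal for `S`, `B` is optimal for `T ⊇ S` and `A ∪ B` is still a candidate set,
then `A ∩ B` is a candidate set for `S`, so `Φ(A ∩ B) ≤ Φ(A)`, and supermodularity forces
`Φ(A ∪ B) ≥ Φ(B)`: hence `A ∪ B` is optimal for `T`. The bound `τ / 10` on optimal sets keeps
every such union below `τ`. With `T = S` this makes `𝒮'(S)` union closed, so `S'_max(S)` is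
itself optimal; with `T = S ∪ {i}` it gives the theorem. -/

section EdgeCount

variable {α : Type*} [DecidableEq α]

lemma card_filter_subset_add_card_filter_subset_le (G : Finset (Finset α)) (A B : Finset α) :
    #{e ∈ G | e ⊆ A} + #{e ∈ G | e ⊆ B} ≤ #{e ∈ G | e ⊆ A ∪ B} + #{e ∈ G | e ⊆ A ∩ B} := by
  have hinter : {e ∈ G | e ⊆ A} ∩ {e ∈ G | e ⊆ B} = {e ∈ G | e ⊆ A ∩ B} := by
    simp only [subset_inter_iff, filter_and]
  have hunion : {e ∈ G | e ⊆ A} ∪ {e ∈ G | e ⊆ B} ⊆ {e ∈ G | e ⊆ A ∪ B} := by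
    intro e he
    simp only [mem_union, mem_filter] at he ⊢
    rcases he with ⟨hG, hA⟩ | ⟨hG, hB⟩
    exacts [⟨hG, hA.trans subset_union_left⟩, ⟨hG, hB.trans subset_union_right⟩]
  rw [← card_union_add_card_inter, hinter]
  exact Nat.add_le_add_right (card_le_card hunion) _

lemma card_union_le_of_le_div_ten {A B : Finset α} {τ : ℕ} (hA : (#A : ℝ) ≤ τ / 10)
    (hB : (#B : ℝ) ≤ τ / 10) : #(A ∪ B) ≤ τ := by
  have hAB : (#(A ∪ B) : ℝ) ≤ #A + #B := by exact_mod_cast card_union_le A B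
  have hτ : (0 : ℝ) ≤ τ := Nat.cast_nonneg τ
  exact_mod_cast (by linarith : (#(A ∪ B) : ℝ) ≤ τ)

end EdgeCount

section Optimal

variable {n : ℕ} {G : Finset (Finset (Fin n))} {αt : ℝ} {τ : ℕ} {S T A B : Finset (Fin n)}

lemma Phi_add_Phi_le (hαt : 0 ≤ αt) (A B : Finset (Fin n)) :
    Phi n G αt A + Phi n G αt B ≤ Phi n G αt (A ∪ B) + Phi n G αt (A ∩ B) := by
  have hedges : (#{e ∈ G | e ⊆ A} : ℝ) + #{e ∈ G | e ⊆ B} ≤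
      #{e ∈ G | e ⊆ A ∪ B} + #{e ∈ G | e ⊆ A ∩ B} := by
    exact_mod_cast card_filter_subset_add_card_filter_subset_le G A B
  have hverts : (#(A ∪ B) : ℝ) + #(A ∩ B) = #A + #B := by
    exact_mod_cast card_union_add_card_inter A B
  unfold Phi
  nlinarith [mul_le_mul_of_nonneg_left hedges hαt]

lemma finite_candidate_values (n : ℕ) (G : Finset (Finset (Fin n))) (αt : ℝ) (τ : ℕ)
    (S : Finset (Fin n)) :
    {x : ℝ | ∃ A : Finset (Fin n), S ⊆ A ∧ #A ≤ τ ∧ x = Phi n G αt A}.Finite :=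
  (Set.finite_range fun A ↦ Phi n G αt A).subset fun _ ⟨A, _, _, hx⟩ ↦ ⟨A, hx.symm⟩

lemma Phi_le_PhiOpt (hS : S ⊆ A) (hA : #A ≤ τ) : Phi n G αt A ≤ PhiOpt n G αt τ S :=
  le_csSup (finite_candidate_values n G αt τ S).bddAbove ⟨A, hS, hA, rfl⟩

lemma exists_mem_OptSets (hS : #S ≤ τ) : ∃ A, A ∈ OptSets n G αt τ S := by
  obtain ⟨A, hSA, hA, hPhi⟩ := Set.Nonempty.csSup_mem
    (by exact ⟨Phi n G αt S, S, subset_rfl, hS, rfl⟩) (finite_candidate_values n G αt τ S)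
  exact ⟨A, hSA, hA, hPhi.symm⟩

lemma subset_Smax (hA : A ∈ OptSets n G αt τ S) : A ⊆ Smax n G αt τ S :=
  le_sup (f := id) (mem_filter.mpr ⟨mem_univ A, hA⟩)

lemma union_mem_OptSets_of_subset (hαt : 0 ≤ αt) (hST : S ⊆ T)
    (hA : A ∈ OptSets n G αt τ S) (hB : B ∈ OptSets n G αt τ T) (hAB : #(A ∪ B) ≤ τ) :
    A ∪ B ∈ OptSets n G αt τ T := by
  obtain ⟨hSA, hAτ, hPhiA⟩ := hA
  obtain ⟨hTB, -, hPhiB⟩ := hB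
  have hTAB : T ⊆ A ∪ B := hTB.trans subset_union_right
  have hunion : Phi n G αt (A ∪ B) ≤ PhiOpt n G αt τ T := Phi_le_PhiOpt hTAB hAB
  have hinter : Phi n G αt (A ∩ B) ≤ PhiOpt n G αt τ S :=
    Phi_le_PhiOpt (subset_inter hSA (hST.trans hTB)) ((card_le_card inter_subset_left).trans hAτ)
  have hsuper := Phi_add_Phi_le (G := G) hαt A B
  exact ⟨hTAB, hAB, by linarith⟩

lemma supClosed_OptSets (hαt : 0 ≤ αt)
    (hsmall : ∀ A ∈ OptSets n G αt τ S, (#A : ℝ) ≤ τ / 10) :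
    SupClosed (OptSets n G αt τ S) := fun A hA B hB ↦
  union_mem_OptSets_of_subset hαt subset_rfl hA hB
    (card_union_le_of_le_div_ten (hsmall A hA) (hsmall B hB))

lemma Smax_mem_OptSets (hαt : 0 ≤ αt) (hS : #S ≤ τ)
    (hsmall : ∀ A ∈ OptSets n G αt τ S, (#A : ℝ) ≤ τ / 10) :
    Smax n G αt τ S ∈ OptSets n G αt τ S := by
  obtain ⟨A, hA⟩ := exists_mem_OptSets (G := G) (αt := αt) hS
  exact (supClosed_OptSets hαt hsmall).finsetSup_mem ⟨A, mem_filter.mpr ⟨mem_univ A, hA⟩⟩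
    fun B hB ↦ (mem_filter.mp hB).2

end Optimal

theorem stmt12_general (n : ℕ) (G : Finset (Finset (Fin n)))
    (αt : ℝ) (hαt : 0 ≤ αt) (τ : ℕ) (S : Finset (Fin n)) (i : Fin n)
    (hS : (insert i S).card ≤ τ)
    (h1 : ∀ S' ∈ OptSets n G αt τ S, (S'.card : ℝ) ≤ (τ : ℝ) / 10)
    (h2 : ∀ S' ∈ OptSets n G αt τ (insert i S), (S'.card : ℝ) ≤ (τ : ℝ) / 10) :
    (∀ S'' ∈ OptSets n G αt τ (insert i S),
        Smax n G αt τ S ∪ S'' ∈ OptSets n G αt τ (insert i S)) ∧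
      Smax n G αt τ S ⊆ Smax n G αt τ (insert i S) := by
  have hSmax := Smax_mem_OptSets hαt ((card_le_card (subset_insert i S)).trans hS) h1
  have hunion : ∀ B ∈ OptSets n G αt τ (insert i S),
      Smax n G αt τ S ∪ B ∈ OptSets n G αt τ (insert i S) := fun B hB ↦
    union_mem_OptSets_of_subset hαt (subset_insert i S) hSmax hB
      (card_union_le_of_le_div_ten (h1 _ hSmax) (h2 B hB))
  obtain ⟨B, hB⟩ := exists_mem_OptSets (G := G) (αt := αt) hS
  exact ⟨hunion, subset_union_left.trans (subset_Smax (hunion B hB))⟩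

theorem stmt12 (n c : ℕ) (G : Finset (Finset (Fin n))) (hG : ∀ e ∈ G, e.card = c)
    (αt : ℝ) (hαt : 0 ≤ αt) (τ : ℕ) (S : Finset (Fin n)) (i : Fin n)
    (hS : (insert i S).card ≤ τ)
    (h1 : ∀ S' ∈ OptSets n G αt τ S, (S'.card : ℝ) ≤ (τ : ℝ) / 10)
    (h2 : ∀ S' ∈ OptSets n G αt τ (insert i S), (S'.card : ℝ) ≤ (τ : ℝ) / 10) :
    (∀ S'' ∈ OptSets n G αt τ (insert i S),
        Smax n G αt τ S ∪ S'' ∈ OptSets n G αt τ (insert i S)) ∧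
      Smax n G αt τ S ⊆ Smax n G αt τ (insert i S) :=
  stmt12_general n G αt hαt τ S i hS h1 h2
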